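/- Khintchine-type lower bound: if ε_1, ..., ε_n are independent uniform random signs, then E|∑_{i=1}^n ε_i| ≥ √(n/2). -/
import Mathlib

open Finset

namespace KhintchineAux

/-- The signed sum as an integer. -/
def gsum (n : ℕ) (s : Fin n → Bool) : ℤ := ∑ i, (if s i then 1 else -1)

/-- Total of absolute values over all sign vectors. -/
def T (n : ℕ) : ℕ := ∑ s : Fin n → Bool, (gsum n s).natAbs

/-- Number of sign vectors with zero sum. -/
def Z (n : ℕ) : ℕ := (univ.filter fun s : Fin n → Bool => gsum n s = 0).card

lemma gsum_eq (n : ℕ) (s : Fin n → Bool) :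
    gsum n s = 2 * ((univ.filter fun i => s i = true).card : ℤ) - n := by
  unfold gsum
  have h : ∀ i : Fin n, (if s i then (1:ℤ) else -1) = (if s i = true then (2:ℤ) else 0) - 1 := by
    intro i; cases s i <;> simp
  rw [Finset.sum_congr rfl fun i _ => h i, Finset.sum_sub_distrib, ← Finset.sum_filter,
    Finset.sum_const, Finset.sum_const]
  simp [mul_comm]

lemma gsum_cons (n : ℕ) (b : Bool) (t : Fin n → Bool) :
    gsum (n+1) (Fin.cons b t) = (if b then 1 else -1) + gsum n t := by
  unfold gsum
  rw [Fin.sum_univ_succ]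
  simp

lemma T_succ (n : ℕ) : T (n+1) = 2 * T n + 2 * Z n := by
  have h1 : T (n+1) = ∑ p : Bool × (Fin n → Bool), (gsum (n+1) (Fin.cons p.1 p.2)).natAbs := by
    rw [T]
    exact (Fintype.sum_equiv (Fin.consEquiv fun _ => Bool) _ _ (fun p => rfl)).symm
  rw [h1, Fintype.sum_prod_type, Fintype.sum_bool]
  have h2 : ∀ t : Fin n → Bool,
      (gsum (n+1) (Fin.cons true t)).natAbs + (gsum (n+1) (Fin.cons false t)).natAbs
        = 2 * (gsum n t).natAbs + (if gsum n t = 0 then 2 else 0) := by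
    intro t
    rw [gsum_cons, gsum_cons]
    rcases eq_or_ne (gsum n t) 0 with h | h <;> simp [h] <;> omega
  rw [← Finset.sum_add_distrib, Finset.sum_congr rfl fun t _ => h2 t,
    Finset.sum_add_distrib, ← Finset.mul_sum, ← Finset.sum_filter, Finset.sum_const,
    smul_eq_mul, T, Z, mul_comm _ 2]

lemma Z_odd (m : ℕ) : Z (2*m+1) = 0 := by
  rw [Z, Finset.card_eq_zero, Finset.filter_eq_empty_iff]
  intro s _
  rw [gsum_eq]
  push_cast
  omega

lemma Z_even (m : ℕ) : Z (2*m) = Nat.centralBinom m := by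
  rw [Nat.centralBinom, Z]
  have hc : (2*m).choose m = (Finset.powersetCard m (univ : Finset (Fin (2*m)))).card := by
    rw [Finset.card_powersetCard, Finset.card_univ, Fintype.card_fin]
  rw [hc]
  have hi : ∀ s ∈ (univ.filter fun s : Fin (2*m) → Bool => gsum (2*m) s = 0),
      (univ.filter fun i => s i = true) ∈ Finset.powersetCard m (univ : Finset (Fin (2*m))) := by
    intro s hs
    rw [Finset.mem_filter] at hs
    rw [Finset.mem_powersetCard]
    refine ⟨Finset.filter_subset _ _, ?_⟩
    have h2 := hs.2
    rw [gsum_eq] at h2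
    push_cast at h2
    omega
  have hj : ∀ A ∈ Finset.powersetCard m (univ : Finset (Fin (2*m))),
      (fun i => decide (i ∈ A)) ∈ (univ.filter fun s : Fin (2*m) → Bool => gsum (2*m) s = 0) := by
    intro A hA
    rw [Finset.mem_filter]
    refine ⟨Finset.mem_univ _, ?_⟩
    rw [Finset.mem_powersetCard] at hA
    rw [gsum_eq]
    have h3 : (univ.filter fun i : Fin (2*m) => (decide (i ∈ A)) = true) = A := by
      ext i; simp
    rw [h3, hA.2]
    push_cast
    ring
  refine Finset.card_bij' (fun s _ => univ.filter fun i => s i = true)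
    (fun A _ => fun i => decide (i ∈ A)) hi hj ?_ ?_
  · intro s _
    funext i
    simp
  · intro A _
    ext i
    simp

lemma T_formula (m : ℕ) :
    T (2*m) = 2*m * Nat.centralBinom m ∧ T (2*m+1) = (4*m+2) * Nat.centralBinom m := by
  induction m with
  | zero =>
    have h0 : T 0 = 0 := by simp [T, gsum]
    have hz : Z 0 = 1 := by
      rw [Z]
      have : (univ.filter fun s : Fin 0 → Bool => gsum 0 s = 0) = univ := by
        apply Finset.filter_true_of_mem
        intro s _
        simp [gsum]
      rw [this, Finset.card_univ]
      simp
    have h1 : T 1 = 2 := by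
      have := T_succ 0
      rw [h0, hz] at this
      simpa using this
    constructor
    · simpa using h0
    · simpa [Nat.centralBinom] using h1
  | succ m ih =>
    have key := Nat.succ_mul_centralBinom_succ m
    have hA : T (2*(m+1)) = 2*(m+1) * Nat.centralBinom (m+1) := by
      have h2 : 2*(m+1) = (2*m+1)+1 := by ring
      rw [h2, T_succ, ih.2, Z_odd]
      nlinarith [key]
    constructor
    · exact hA
    · have h3 : 2*(m+1)+1 = (2*(m+1))+1 := rfl
      rw [h3, T_succ, hA, Z_even]
      ring

lemma cb_sq (m : ℕ) (hm : 1 ≤ m) : 16^m ≤ 4*m*(Nat.centralBinom m)^2 := by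
  induction m with
  | zero => omega
  | succ m ih =>
    rcases Nat.eq_zero_or_pos m with h0 | h0
    · subst h0
      simp [Nat.centralBinom]
    · have ih' := ih h0
      have key := Nat.succ_mul_centralBinom_succ m
      set K := Nat.centralBinom m with hK
      set L := Nat.centralBinom (m+1) with hL
      have h2 : 16^(m+1) * (m+1)^2 ≤ 4*(m+1)*L^2 * (m+1)^2 := by
        calc 16^(m+1)*(m+1)^2 = 16*(m+1)^2 * 16^m := by ring
        _ ≤ 16*(m+1)^2 * (4*m*K^2) := Nat.mul_le_mul_left _ ih'
        _ ≤ 4*(m+1)*(2*(2*m+1)*K)^2 := by nlinarith [sq_nonneg K]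
        _ = 4*(m+1)*((m+1)*L)^2 := by rw [key]
        _ = 4*(m+1)*L^2 * (m+1)^2 := by ring
      exact Nat.le_of_mul_le_mul_right h2 (by positivity)

lemma cb_sq' (m : ℕ) : 16^m ≤ (4*m+2)*(Nat.centralBinom m)^2 := by
  rcases Nat.eq_zero_or_pos m with h0 | h0
  · subst h0; simp [Nat.centralBinom]
  · calc 16^m ≤ 4*m*(Nat.centralBinom m)^2 := cb_sq m h0
    _ ≤ (4*m+2)*(Nat.centralBinom m)^2 := Nat.mul_le_mul_right _ (by omega)

lemma main_nat (n : ℕ) : n * 4^n ≤ 2 * (T n)^2 := by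
  rcases Nat.even_or_odd n with ⟨m, hm⟩ | ⟨m, hm⟩
  · have hn : n = 2*m := by omega
    subst hn
    rw [(T_formula m).1]
    have h4 : (4:ℕ)^(2*m) = 16^m := by
      rw [pow_mul]; norm_num
    rw [h4]
    rcases Nat.eq_zero_or_pos m with h0 | h0
    · subst h0; simp
    · have := cb_sq m h0
      nlinarith [this]
  · subst hm
    rw [(T_formula m).2]
    have h4 : (4:ℕ)^(2*m+1) = 4 * 16^m := by
      rw [pow_succ, pow_mul]; ring_nf
    rw [h4]
    have := cb_sq' m
    nlinarith [this]

end KhintchineAux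

/-- Khintchine-type lower bound: for `n` independent uniform random signs,
`E|∑ ε_i| ≥ √(n/2)`. -/
theorem khintchine_lower (n : ℕ) :
    (∑ s : Fin n → Bool, |∑ i, (if s i then (1 : ℝ) else -1)|) / 2 ^ n ≥
      Real.sqrt (n / 2) := by
  have hT : (∑ s : Fin n → Bool, |∑ i, (if s i then (1 : ℝ) else -1)|)
      = (KhintchineAux.T n : ℝ) := by
    rw [KhintchineAux.T]
    push_cast
    refine Finset.sum_congr rfl fun s _ => ?_
    have h1 : (∑ i, (if s i then (1:ℝ) else -1)) = ((KhintchineAux.gsum n s : ℤ) : ℝ) := by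
      rw [KhintchineAux.gsum]
      push_cast
      refine Finset.sum_congr rfl fun i _ => ?_
      cases s i <;> simp
    rw [h1, Nat.cast_natAbs, Int.cast_abs]
  rw [ge_iff_le, hT]
  have h2 : (0:ℝ) < 2^n := by positivity
  have hsq : (n:ℝ)/2 ≤ ((KhintchineAux.T n : ℝ)/2^n)^2 := by
    rw [div_pow]
    rw [div_le_div_iff₀ (by norm_num) (by positivity)]
    have hnat := KhintchineAux.main_nat n
    have hcast : (n:ℝ) * 4^n ≤ 2 * (KhintchineAux.T n : ℝ)^2 := by exact_mod_cast hnat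
    have h4 : ((2:ℝ)^n)^2 = 4^n := by
      rw [← pow_mul, mul_comm, pow_mul]; norm_num
    rw [h4]
    linarith
  have := Real.sqrt_le_sqrt hsq
  rwa [Real.sqrt_sq (by positivity)] at this
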